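/- arXiv:1604.08121 — 2 statements merged into one kernel-verified Lean document; each statement's English description precedes it below -/
import Mathlib

section
/- Let P_ℓ be the multilinear real polynomial representing majority on ℓ bits. For any real values a₁,...,a_ℓ ∈ ℝ (not necessarily Boolean), if more than ℓ/2 of the values a_i equal b ∈ {0,1}, then P_ℓ(a₁,...,a_ℓ) = b. -/
/-!
A polynomial of degree at most one in a variable `x_j` is affine in `x_j`, so its value at any
point is an affine combination of its values with `x_j` set to `0` and to `1`. Iterating over the
coordinates where `a` differs from `b`, the value `P(a)` is an affine combination of values of `P`
at Boolean points that still agree with `b` on a strict majority of coordinates; all of them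
equal `b`, hence so does `P(a)`.
-/

namespace MvPolynomial

variable {R σ : Type*} [CommRing R]

lemma prod_support_update_pow [DecidableEq σ] (d : σ →₀ ℕ) (a : σ → R) (j : σ) (t : R) :
    ∏ i ∈ d.support, Function.update a j t i ^ d i
      = t ^ d j * ∏ i ∈ d.support.erase j, a i ^ d i := by
  have hoff : ∏ i ∈ d.support.erase j, Function.update a j t i ^ d i
      = ∏ i ∈ d.support.erase j, a i ^ d i :=
    Finset.prod_congr rfl fun i hi => by rw [Function.update_of_ne (Finset.ne_of_mem_erase hi)]
  by_cases hj : j ∈ d.support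
  · rw [← Finset.mul_prod_erase _ _ hj, hoff, Function.update_self]
  · rw [Finsupp.notMem_support_iff.mp hj, pow_zero, one_mul, ← hoff,
      Finset.erase_eq_of_notMem hj]

lemma eval_update_of_degreeOf_le_one [DecidableEq σ] {P : MvPolynomial σ R} {j : σ}
    (hj : P.degreeOf j ≤ 1) (a : σ → R) (t : R) :
    eval (Function.update a j t) P
      = (1 - t) * eval (Function.update a j 0) P + t * eval (Function.update a j 1) P := by
  simp only [eval_eq, Finset.mul_sum, ← Finset.sum_add_distrib]
  refine Finset.sum_congr rfl fun d hd => ?_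
  have hdj : d j ≤ 1 := (monomial_le_degreeOf j hd).trans hj
  simp only [prod_support_update_pow]
  interval_cases d j <;> ring

lemma eval_eq_of_forall_eval_boolean_eq {P : MvPolynomial σ R} (hP : ∀ i, P.degreeOf i ≤ 1)
    {c : R} (S : Finset σ) (a : σ → R)
    (h : ∀ x : σ → R, (∀ i ∈ S, x i = 0 ∨ x i = 1) → (∀ i ∉ S, x i = a i) → eval x P = c) :
    eval a P = c := by
  classical
  induction S using Finset.induction_on generalizing a with
  | empty => exact h a (by simp) fun _ _ => rfl
  | insert j S hjS ih =>
    have hvertex : ∀ e : R, (e = 0 ∨ e = 1) → eval (Function.update a j e) P = c := by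
      intro e he
      refine ih _ fun x hxS hxa => h x (fun i hi => ?_) fun i hi => ?_
      · rcases Finset.mem_insert.mp hi with rfl | hi
        · simpa [hxa i hjS] using he
        · exact hxS i hi
      · rw [hxa i (fun hi' => hi (Finset.mem_insert_of_mem hi')),
          Function.update_of_ne (by rintro rfl; exact hi (Finset.mem_insert_self i S))]
    rw [← Function.update_eq_self j a, eval_update_of_degreeOf_le_one (hP j),
      hvertex 0 (Or.inl rfl), hvertex 1 (Or.inr rfl)]
    ring

end MvPolynomial

lemma Bool.lt_two_mul_card_filter_eq_true_iff {ι : Type*} [Fintype ι] (y : ι → Bool) {b : Bool}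
    (hmaj : Fintype.card ι < 2 * (Finset.univ.filter fun i => y i = b).card) :
    Fintype.card ι < 2 * (Finset.univ.filter fun i => y i = true).card ↔ b = true := by
  cases b with
  | true => simpa using hmaj
  | false =>
    have hsplit := Finset.card_filter_add_card_filter_not
      (s := Finset.univ) fun i => y i = true
    simp only [Bool.not_eq_true, Finset.card_univ] at hsplit
    simp only [Bool.false_eq_true, iff_false, not_lt]
    omega

lemma Bool.ite_one_zero_injective {R : Type*} [AddMonoidWithOne R] [NeZero (1 : R)] :
    Function.Injective fun b : Bool => if b then (1 : R) else 0 := by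
  intro b c h
  cases b <;> cases c <;> simp_all

/-- If more than ℓ/2 of the (arbitrary real) inputs to the multilinear
majority polynomial equal `b ∈ {0,1}`, then the polynomial evaluates to `b`. -/
theorem majority_poly_eval_real (ℓ : ℕ) (P : MvPolynomial (Fin ℓ) ℝ)
    (hml : ∀ i : Fin ℓ, P.degreeOf i ≤ 1)
    (hrep : ∀ a : Fin ℓ → Bool,
      MvPolynomial.eval (fun i => if a i then (1 : ℝ) else 0) P
        = if ℓ < 2 * (Finset.univ.filter fun i => a i = true).card then (1 : ℝ) else 0)
    (a : Fin ℓ → ℝ) (b : Bool)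
    (hmaj : ℓ < 2 * (Finset.univ.filter
      fun i => a i = (if b then (1 : ℝ) else 0)).card) :
    MvPolynomial.eval a P = if b then (1 : ℝ) else 0 := by
  set bv : ℝ := if b then 1 else 0
  have hbv : bv = 0 ∨ bv = 1 := by cases b <;> simp [bv]
  refine MvPolynomial.eval_eq_of_forall_eval_boolean_eq hml
    (Finset.univ.filter fun i => a i ≠ bv) a fun x hxS hxa => ?_
  have hxa_maj : ∀ i, a i = bv → x i = bv := fun i hi =>
    (hxa i (by simpa using hi)).trans hi
  have hx01 : ∀ i, x i = 0 ∨ x i = 1 := fun i => by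
    by_cases hi : a i = bv
    · rwa [hxa_maj i hi]
    · exact hxS i (by simpa using hi)
  set y : Fin ℓ → Bool := fun i => decide (x i = 1)
  have hxy : x = fun i => if y i then (1 : ℝ) else 0 := by
    funext i; rcases hx01 i with h | h <;> simp [y, h]
  have hymaj : ℓ < 2 * (Finset.univ.filter fun i => y i = b).card := by
    refine hmaj.trans_le (Nat.mul_le_mul_left 2 (Finset.card_le_card fun i hi => ?_))
    simp only [Finset.mem_filter, Finset.mem_univ, true_and] at hi ⊢
    apply Bool.ite_one_zero_injective (R := ℝ)
    simpa [← congrFun hxy i] using hxa_maj i hi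
  have hy := Bool.lt_two_mul_card_filter_eq_true_iff y (by rwa [Fintype.card_fin])
  rw [Fintype.card_fin] at hy
  rw [hxy, hrep y, if_congr hy rfl rfl]
end

section
/- Let m, r, ℓ, s be positive integers with r ≥ ℓ. If an (m,r,ℓ,s)-design exists, then m ≥ min(r²/(2ℓ), s). -/
/-!
Any `k` members of the design cover at least `k r - (k choose 2) ℓ` points, since each new member
meets the previous ones in at most `ℓ` points apiece. If `s ℓ ≤ r`, a single member already has
`r ≥ s` points. Otherwise `k = ⌊r / ℓ⌋ + 1 ≤ s` members are available, and with `x = k ℓ ∈ (r, r + ℓ]`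
the bound `k r - (k choose 2) ℓ = (2 x r - x² + x ℓ) / (2 ℓ)` is at least `r² / (2 ℓ)`
because `(x - r)² ≤ x ℓ`.
-/

open Finset

theorem Finset.card_inter_sup_le {α : Type*} [DecidableEq α] (a : Finset α) (G : Finset (Finset α))
    {ℓ : ℕ} (h : ∀ T ∈ G, (a ∩ T).card ≤ ℓ) : (a ∩ G.sup id).card ≤ G.card * ℓ := by
  rw [← inf_eq_inter, sup_inf_distrib_left, sup_eq_biUnion]
  exact card_biUnion_le_card_mul G _ ℓ h

theorem Finset.mul_le_card_sup_add_choose_two_mul {α : Type*} [DecidableEq α]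
    {r ℓ : ℕ} (G : Finset (Finset α)) (hsize : ∀ S ∈ G, r ≤ S.card)
    (hinter : ∀ S ∈ G, ∀ T ∈ G, S ≠ T → (S ∩ T).card ≤ ℓ) :
    G.card * r ≤ (G.sup id).card + G.card.choose 2 * ℓ := by
  induction G using Finset.induction_on with
  | empty => simp
  | @insert a G ha ih =>
    have ih := ih (fun S hS => hsize S (mem_insert_of_mem hS))
      (fun S hS T hT => hinter S (mem_insert_of_mem hS) T (mem_insert_of_mem hT))
    have hr := hsize a (mem_insert_self a G)
    have hunion := card_union_add_card_inter a (G.sup id)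
    have hoverlap : (a ∩ G.sup id).card ≤ G.card * ℓ :=
      card_inter_sup_le a G fun T hT =>
        hinter a (mem_insert_self a G) T (mem_insert_of_mem hT) (ne_of_mem_of_not_mem hT ha).symm
    have hchoose : (G.card + 1).choose 2 = G.card.choose 2 + G.card := by
      rw [Nat.choose_succ_succ', Nat.choose_one_right, add_comm]
    rw [card_insert_of_notMem ha, sup_insert, id, sup_eq_union, hchoose, add_mul, add_mul, one_mul]
    omega

theorem Finset.mul_le_card_add_choose_two_mul {α : Type*} [Fintype α] [DecidableEq α]
    {r ℓ : ℕ} (F : Finset (Finset α)) (hsize : ∀ S ∈ F, r ≤ S.card)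
    (hinter : ∀ S ∈ F, ∀ T ∈ F, S ≠ T → (S ∩ T).card ≤ ℓ) {k : ℕ} (hk : k ≤ F.card) :
    k * r ≤ Fintype.card α + k.choose 2 * ℓ := by
  obtain ⟨G, hGF, rfl⟩ := exists_subset_card_eq hk
  have hcover := mul_le_card_sup_add_choose_two_mul G (fun S hS => hsize S (hGF hS))
    (fun S hS T hT => hinter S (hGF hS) T (hGF hT))
  have := card_le_univ (G.sup id)
  omega

theorem min_le_of_forall_mul_le_add_choose_two_mul {m r ℓ s : ℕ} (hℓ : 0 < ℓ)
    (h : ∀ k ≤ s, k * r ≤ m + k.choose 2 * ℓ) :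
    min ((r : ℝ) ^ 2 / (2 * ℓ)) (s : ℝ) ≤ m := by
  rcases le_or_gt (s * ℓ) r with hsr | hrs
  · refine min_le_of_right_le ?_
    rcases Nat.eq_zero_or_pos s with rfl | hs
    · simp
    have hrm : r ≤ m := by simpa using h 1 hs
    exact_mod_cast (Nat.le_mul_of_pos_right s hℓ).trans (hsr.trans hrm)
  · refine min_le_of_left_le ?_
    set q := r / ℓ
    have hlo : q * ℓ ≤ r := Nat.div_mul_le_self r ℓ
    have hhi : r < (q + 1) * ℓ := by rw [add_one_mul]; exact Nat.lt_div_mul_add hℓ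
    have hcover : 2 * ((q + 1) * r : ℝ) ≤ 2 * m + (q + 1) * q * ℓ := by
      have := h (q + 1) (Nat.lt_of_mul_lt_mul_right (hlo.trans_lt hrs))
      rw [← Nat.cast_le (α := ℝ)] at this
      push_cast [Nat.cast_choose_two] at this
      linarith
    have hlo' : (q * ℓ : ℝ) ≤ r := by exact_mod_cast hlo
    have hhi' : (r : ℝ) < (q + 1) * ℓ := by exact_mod_cast hhi
    have hℓ' : (0 : ℝ) < ℓ := by exact_mod_cast hℓ
    rw [div_le_iff₀ (by positivity)]
    nlinarith [mul_nonneg (sub_nonneg.mpr hhi'.le) (sub_nonneg.mpr hlo')]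

theorem design_lower_bound_min_general (m r ℓ s : ℕ)
    (hℓ : 1 ≤ ℓ)
    (F : Finset (Finset (Fin m))) (hcard : F.card = s)
    (hsize : ∀ S ∈ F, S.card = r)
    (hinter : ∀ S ∈ F, ∀ T ∈ F, S ≠ T → (S ∩ T).card ≤ ℓ) :
    (m : ℝ) ≥ min ((r : ℝ) ^ 2 / (2 * ℓ)) (s : ℝ) :=
  min_le_of_forall_mul_le_add_choose_two_mul hℓ fun k hk => by
    simpa using F.mul_le_card_add_choose_two_mul (fun S hS => (hsize S hS).ge) hinter (hcard ▸ hk)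

/-- If r ≥ ℓ ≥ 1 and an (m,r,ℓ,s)-design exists, then
m ≥ min(r²/(2ℓ), s). -/
theorem design_lower_bound_min (m r ℓ s : ℕ) (hm : 0 < m) (hs : 0 < s)
    (hℓ : 1 ≤ ℓ) (hrℓ : ℓ ≤ r)
    (F : Finset (Finset (Fin m))) (hcard : F.card = s)
    (hsize : ∀ S ∈ F, S.card = r)
    (hinter : ∀ S ∈ F, ∀ T ∈ F, S ≠ T → (S ∩ T).card ≤ ℓ) :
    (m : ℝ) ≥ min ((r : ℝ) ^ 2 / (2 * ℓ)) (s : ℝ) :=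
  design_lower_bound_min_general m r ℓ s hℓ F hcard hsize hinter
end
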